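/- Fix a sequence A of N integers, a window length K with 1 ≤ K ≤ N, a rank l with 1 ≤ l ≤ K, and any index b. Then for every i with 1 ≤ i ≤ N−K: (1) g_b(i−1) ≤ g_b(i); and (2) if i ∈ S_{b-cross}, then g_b(i−1) < g_b(i). -/

import Mathlib

/-- The rank of `A_m` within the window `[i,j]`: the number of indices `m' ∈ [i,j]`
with `A_{m'} < A_m`, or `A_{m'} = A_m` and `m' ≤ m`. -/
def wRank (A : ℕ → ℤ) (i j m : ℕ) : ℕ :=
  ((Finset.Icc i j).filter (fun m' => A m' < A m ∨ (A m' = A m ∧ m' ≤ m))).card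

/-- `sIdx A i j r` is the unique index in `[i,j]` whose element has rank `r`
(recovered as the `sup` of the singleton filter). -/
def sIdx (A : ℕ → ℤ) (i j r : ℕ) : ℕ :=
  ((Finset.Icc i j).filter (fun m => wRank A i j m = r)).sup id

/-- `Conf_{l,b}([i,j])`: the set of ranks `l' ∈ {1,…,l}` whose witnessing index
exceeds `b`. -/
def conf (A : ℕ → ℤ) (l b i j : ℕ) : Finset ℕ :=
  (Finset.Icc 1 l).filter (fun r => b < sIdx A i j r)

namespace StmtAux

variable (A : ℕ → ℤ)

lemma pred_trans {a b c : ℕ} (h1 : A a < A b ∨ (A a = A b ∧ a ≤ b))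
    (h2 : A b < A c ∨ (A b = A c ∧ b ≤ c)) :
    A a < A c ∨ (A a = A c ∧ a ≤ c) := by
  rcases h1 with h1 | ⟨h1, h1'⟩ <;> rcases h2 with h2 | ⟨h2, h2'⟩
  · exact Or.inl (h1.trans h2)
  · exact Or.inl (h2 ▸ h1)
  · exact Or.inl (h1 ▸ h2)
  · exact Or.inr ⟨h1.trans h2, h1'.trans h2'⟩

lemma pred_total (m1 m2 : ℕ) :
    (A m1 < A m2 ∨ (A m1 = A m2 ∧ m1 ≤ m2)) ∨ (A m2 < A m1 ∨ (A m2 = A m1 ∧ m2 ≤ m1)) := by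
  rcases lt_trichotomy (A m1) (A m2) with h | h | h
  · exact Or.inl (Or.inl h)
  · rcases le_total m1 m2 with h' | h'
    · exact Or.inl (Or.inr ⟨h, h'⟩)
    · exact Or.inr (Or.inr ⟨h.symm, h'⟩)
  · exact Or.inr (Or.inl h)

lemma wRank_lt {i j m1 m2 : ℕ} (hm1 : m1 ∈ Finset.Icc i j) (hm2 : m2 ∈ Finset.Icc i j)
    (h : A m1 < A m2 ∨ (A m1 = A m2 ∧ m1 ≤ m2)) (hne : m1 ≠ m2) :
    wRank A i j m1 < wRank A i j m2 := by
  unfold wRank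
  apply Finset.card_lt_card
  rw [Finset.ssubset_def]
  constructor
  · intro m' hm'
    simp only [Finset.mem_filter] at hm' ⊢
    exact ⟨hm'.1, pred_trans A hm'.2 h⟩
  · intro hsub
    have := hsub (Finset.mem_filter.mpr ⟨hm2, Or.inr ⟨rfl, le_refl _⟩⟩)
    simp only [Finset.mem_filter] at this
    rcases h with h | ⟨h, h'⟩ <;> rcases this.2 with h2 | ⟨h2, h2'⟩ <;> omega

lemma wRank_injOn {i j m1 m2 : ℕ} (hm1 : m1 ∈ Finset.Icc i j) (hm2 : m2 ∈ Finset.Icc i j)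
    (h : wRank A i j m1 = wRank A i j m2) : m1 = m2 := by
  by_contra hne
  rcases pred_total A m1 m2 with hp | hp
  · have := wRank_lt A hm1 hm2 hp hne
    omega
  · have := wRank_lt A hm2 hm1 hp (Ne.symm hne)
    omega

lemma wRank_mem {i j m : ℕ} (hm : m ∈ Finset.Icc i j) :
    wRank A i j m ∈ Finset.Icc 1 (j + 1 - i) := by
  simp only [Finset.mem_Icc]
  constructor
  · have : m ∈ (Finset.Icc i j).filter (fun m' => A m' < A m ∨ (A m' = A m ∧ m' ≤ m)) :=
      Finset.mem_filter.mpr ⟨hm, Or.inr ⟨rfl, le_refl _⟩⟩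
    have := Finset.card_pos.mpr ⟨m, this⟩
    unfold wRank; omega
  · calc wRank A i j m ≤ (Finset.Icc i j).card := Finset.card_filter_le _ _
    _ = j + 1 - i := Nat.card_Icc i j

lemma exists_wRank {i j r : ℕ} (hr : r ∈ Finset.Icc 1 (j + 1 - i)) :
    ∃ m ∈ Finset.Icc i j, wRank A i j m = r := by
  have himg : (Finset.Icc i j).image (wRank A i j) = Finset.Icc 1 (j + 1 - i) := by
    apply Finset.eq_of_subset_of_card_le
    · intro x hx
      obtain ⟨m, hm, rfl⟩ := Finset.mem_image.mp hx
      exact wRank_mem A hm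
    · rw [Finset.card_image_of_injOn (fun a ha b hb => wRank_injOn A ha hb)]
      rw [Nat.card_Icc, Nat.card_Icc]
      omega
  rw [← himg] at hr
  obtain ⟨m, hm, hmr⟩ := Finset.mem_image.mp hr
  exact ⟨m, hm, hmr⟩

lemma sIdx_wRank {i j m : ℕ} (hm : m ∈ Finset.Icc i j) :
    sIdx A i j (wRank A i j m) = m := by
  unfold sIdx
  have : (Finset.Icc i j).filter (fun m' => wRank A i j m' = wRank A i j m) = {m} := by
    ext m'
    simp only [Finset.mem_filter, Finset.mem_singleton]
    constructor
    · rintro ⟨hm', he⟩; exact wRank_injOn A hm' hm he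
    · rintro rfl; exact ⟨hm, rfl⟩
  rw [this, Finset.sup_singleton, id]

lemma sIdx_spec {i j r : ℕ} (hr : r ∈ Finset.Icc 1 (j + 1 - i)) :
    sIdx A i j r ∈ Finset.Icc i j ∧ wRank A i j (sIdx A i j r) = r := by
  obtain ⟨m, hm, rfl⟩ := exists_wRank A hr
  rw [sIdx_wRank A hm]
  exact ⟨hm, rfl⟩


lemma conf_card {i j l b : ℕ} (hl : l ≤ j + 1 - i) :
    (conf A l b i j).card =
    ((Finset.Icc i j).filter (fun m => wRank A i j m ≤ l ∧ b < m)).card := by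
  symm
  apply Finset.card_bij (fun m _ => wRank A i j m)
  · intro m hm
    simp only [Finset.mem_filter] at hm
    obtain ⟨hmI, hrl, hbm⟩ := hm
    have hmem := wRank_mem A hmI
    simp only [Finset.mem_Icc] at hmem
    simp only [conf, Finset.mem_filter, Finset.mem_Icc]
    refine ⟨⟨hmem.1, hrl⟩, ?_⟩
    rw [sIdx_wRank A hmI]
    exact hbm
  · intro m1 hm1 m2 hm2 he
    simp only [Finset.mem_filter] at hm1 hm2
    exact wRank_injOn A hm1.1 hm2.1 he
  · intro r hr
    simp only [conf, Finset.mem_filter, Finset.mem_Icc] at hr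
    obtain ⟨⟨hr1, hrl⟩, hbs⟩ := hr
    have hr' : r ∈ Finset.Icc 1 (j + 1 - i) := by
      simp only [Finset.mem_Icc]; omega
    obtain ⟨hsI, hsr⟩ := sIdx_spec A hr'
    refine ⟨sIdx A i j r, ?_, hsr⟩
    simp only [Finset.mem_filter]
    exact ⟨hsI, by rw [hsr]; exact hrl, hbs⟩

lemma rank_card {i j l : ℕ} (hl : l ≤ j + 1 - i) :
    ((Finset.Icc i j).filter (fun m => wRank A i j m ≤ l)).card = l := by
  have : ((Finset.Icc i j).filter (fun m => wRank A i j m ≤ l)).card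
      = (Finset.Icc 1 l).card := by
    apply Finset.card_bij (fun m _ => wRank A i j m)
    · intro m hm
      simp only [Finset.mem_filter] at hm
      have := wRank_mem A hm.1
      simp only [Finset.mem_Icc] at this ⊢
      exact ⟨this.1, hm.2⟩
    · intro m1 hm1 m2 hm2 he
      simp only [Finset.mem_filter] at hm1 hm2
      exact wRank_injOn A hm1.1 hm2.1 he
    · intro r hr
      simp only [Finset.mem_Icc] at hr
      have hr' : r ∈ Finset.Icc 1 (j + 1 - i) := by
        simp only [Finset.mem_Icc]; omega
      obtain ⟨m, hm, hmr⟩ := exists_wRank A hr'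
      refine ⟨m, ?_, hmr⟩
      simp only [Finset.mem_filter]
      exact ⟨hm, by omega⟩
  rw [this, Nat.card_Icc]
  omega

lemma rank_split {i j l b : ℕ} (hl : l ≤ j + 1 - i) :
    ((Finset.Icc i j).filter (fun m => wRank A i j m ≤ l ∧ b < m)).card +
    ((Finset.Icc i j).filter (fun m => wRank A i j m ≤ l ∧ m ≤ b)).card = l := by
  have h := Finset.card_filter_add_card_filter_not
    (s := (Finset.Icc i j).filter (fun m => wRank A i j m ≤ l)) (p := fun m => b < m)
  rw [Finset.filter_filter, Finset.filter_filter] at h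
  simp only [not_lt] at h
  rw [rank_card A hl] at h
  convert h using 3 <;> rw [and_comm]


-- if the predicate at j fails, dropping j only shrinks the count
lemma rank_drop {K j m : ℕ} (hK : 1 ≤ K) (hm : m ∈ Finset.Icc (j+1) (j+K-1))
    (hnp : ¬ (A j < A m ∨ (A j = A m ∧ j ≤ m))) :
    wRank A j (j+K-1) m ≤ wRank A (j+1) (j+K) m := by
  unfold wRank
  apply Finset.card_le_card
  intro x hx
  simp only [Finset.mem_filter, Finset.mem_Icc] at hx ⊢
  have hxj : x ≠ j := by rintro rfl; exact hnp hx.2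
  exact ⟨⟨by omega, by omega⟩, hx.2⟩

lemma rank_add_one {K j m : ℕ} (hK : 1 ≤ K) (hm : m ∈ Finset.Icc (j+1) (j+K-1)) :
    wRank A j (j+K-1) m ≤ wRank A (j+1) (j+K) m + 1 := by
  unfold wRank
  calc ((Finset.Icc j (j+K-1)).filter
        (fun m' => A m' < A m ∨ (A m' = A m ∧ m' ≤ m))).card
      ≤ (insert j ((Finset.Icc (j+1) (j+K)).filter
        (fun m' => A m' < A m ∨ (A m' = A m ∧ m' ≤ m)))).card := by
        apply Finset.card_le_card
        intro x hx
        simp only [Finset.mem_filter, Finset.mem_Icc] at hx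
        rcases eq_or_ne x j with rfl | hne
        · exact Finset.mem_insert_self _ _
        · apply Finset.mem_insert_of_mem
          simp only [Finset.mem_filter, Finset.mem_Icc]
          exact ⟨⟨by omega, by omega⟩, hx.2⟩
    _ ≤ _ + 1 := Finset.card_insert_le _ _

lemma conf_mono {K l b j : ℕ} (hK : 1 ≤ K) (hlK : l ≤ K) :
    (conf A l b j (j + K - 1)).card ≤ (conf A l b (j+1) (j+K)).card := by
  have hw1 : j + K - 1 + 1 - j = K := by omega
  have hw2 : j + K + 1 - (j + 1) = K := by omega
  rcases le_or_gt (j + K - 1) b with hb | hb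
  · -- left conf is empty
    have he : conf A l b j (j + K - 1) = ∅ := by
      apply Finset.filter_false_of_mem
      intro r hr
      simp only [Finset.mem_Icc] at hr
      have hr' : r ∈ Finset.Icc 1 (j + K - 1 + 1 - j) := by
        simp only [Finset.mem_Icc]; omega
      have := (sIdx_spec A hr').1
      simp only [Finset.mem_Icc] at this
      omega
    rw [he]
    simp
  rcases lt_or_ge b j with hbj | hbj
  · -- both confs are full
    have h1 : conf A l b j (j + K - 1) = Finset.Icc 1 l := by
      apply Finset.filter_true_of_mem
      intro r hr
      simp only [Finset.mem_Icc] at hr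
      have hr' : r ∈ Finset.Icc 1 (j + K - 1 + 1 - j) := by
        simp only [Finset.mem_Icc]; omega
      have := (sIdx_spec A hr').1
      simp only [Finset.mem_Icc] at this
      omega
    have h2 : conf A l b (j+1) (j+K) = Finset.Icc 1 l := by
      apply Finset.filter_true_of_mem
      intro r hr
      simp only [Finset.mem_Icc] at hr
      have hr' : r ∈ Finset.Icc 1 (j + K + 1 - (j+1)) := by
        simp only [Finset.mem_Icc]; omega
      have := (sIdx_spec A hr').1
      simp only [Finset.mem_Icc] at this
      omega
    rw [h1, h2]
  · -- main case : j ≤ b ≤ j + K - 2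
    have hlK1 : l ≤ j + K - 1 + 1 - j := by omega
    have hlK2 : l ≤ j + K + 1 - (j + 1) := by omega
    rw [conf_card A hlK1, conf_card A hlK2]
    have key : ((Finset.Icc (j+1) (j+K)).filter
          (fun m => wRank A (j+1) (j+K) m ≤ l ∧ m ≤ b)).card ≤
        ((Finset.Icc j (j+K-1)).filter
          (fun m => wRank A j (j+K-1) m ≤ l ∧ m ≤ b)).card := by
      apply Finset.card_le_card_of_injOn
        (fun m => if wRank A j (j+K-1) m ≤ l then m else j)
      · intro m hm
        simp only [Finset.mem_coe, Finset.mem_filter, Finset.mem_Icc] at hm; rw [Finset.mem_coe]; beta_reduce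
        obtain ⟨⟨hm1, hm2⟩, hrl, hmb⟩ := hm
        have hmW : m ∈ Finset.Icc (j+1) (j+K-1) := by
          simp only [Finset.mem_Icc]; omega
        split_ifs with hcase
        · simp only [Finset.mem_filter, Finset.mem_Icc]
          exact ⟨⟨by omega, by omega⟩, hcase, hmb⟩
        · -- wRank at the old window > l; then pred(j,m) holds and rank j ≤ l
          have hpred : A j < A m ∨ (A j = A m ∧ j ≤ m) := by
            by_contra hnp
            have := rank_drop A hK hmW hnp
            omega
          have hjW : j ∈ Finset.Icc j (j+K-1) := by
            simp only [Finset.mem_Icc]; omega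
          have hmW' : m ∈ Finset.Icc j (j+K-1) := by
            simp only [Finset.mem_Icc]; omega
          have hlt := wRank_lt A hjW hmW' hpred (by omega)
          have hle := rank_add_one A hK hmW
          simp only [Finset.mem_filter, Finset.mem_Icc]
          exact ⟨⟨le_refl _, by omega⟩, by omega, hbj⟩
      · intro m1 hm1 m2 hm2 he
        simp only [Finset.coe_filter, Set.mem_setOf_eq, Finset.mem_Icc] at hm1 hm2
        obtain ⟨⟨hm11, hm12⟩, hr1, hb1⟩ := hm1
        obtain ⟨⟨hm21, hm22⟩, hr2, hb2⟩ := hm2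
        have hmW1 : m1 ∈ Finset.Icc (j+1) (j+K-1) := by
          simp only [Finset.mem_Icc]; omega
        have hmW2 : m2 ∈ Finset.Icc (j+1) (j+K-1) := by
          simp only [Finset.mem_Icc]; omega
        simp only at he
        split_ifs at he with h1 h2 h2
        · exact he
        · omega
        · omega
        · -- both ranks are exactly l+1 in the old window
          have e1 := rank_add_one A hK hmW1
          have e2 := rank_add_one A hK hmW2
          have d1 := rank_drop A hK hmW1
          have d2 := rank_drop A hK hmW2
          have hp1 : A j < A m1 ∨ (A j = A m1 ∧ j ≤ m1) := by
            by_contra hnp; have := rank_drop A hK hmW1 hnp; omega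
          have hp2 : A j < A m2 ∨ (A j = A m2 ∧ j ≤ m2) := by
            by_contra hnp; have := rank_drop A hK hmW2 hnp; omega
          have hmw1 : m1 ∈ Finset.Icc j (j+K-1) := by
            simp only [Finset.mem_Icc]; omega
          have hmw2 : m2 ∈ Finset.Icc j (j+K-1) := by
            simp only [Finset.mem_Icc]; omega
          apply wRank_injOn A hmw1 hmw2
          omega
    have s1 := rank_split A (b := b) hlK1
    have s2 := rank_split A (b := b) hlK2
    omega

lemma conf_card_split {i j l b : ℕ} (hl : 1 ≤ l) :
    (conf A l b i j).card =
    (conf A (l-1) b i j).card + (if b < sIdx A i j l then 1 else 0) := by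
  have h : Finset.Icc 1 l = insert l (Finset.Icc 1 (l-1)) := by
    ext x
    simp only [Finset.mem_Icc, Finset.mem_insert]
    omega
  unfold conf
  rw [h, Finset.filter_insert]
  split_ifs with hb
  · rw [Finset.card_insert_of_notMem]
    intro hmem
    have := Finset.mem_of_mem_filter l hmem
    simp only [Finset.mem_Icc] at this
    omega
  · simp

lemma mem_conf {i j l b : ℕ} (hl : 1 ≤ l) :
    l ∈ conf A l b i j ↔ b < sIdx A i j l := by
  simp only [conf, Finset.mem_filter, Finset.mem_Icc]
  constructor
  · exact fun h => h.2
  · exact fun h => ⟨⟨hl, le_refl _⟩, h⟩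

end StmtAux

/-- `g_b(i) = |Conf_{l,b}([i,i+K-1])| + |Conf_{l-1,b}([i,i+K-1])|`. -/
def gfun (A : ℕ → ℤ) (K l b i : ℕ) : ℕ :=
  (conf A l b i (i + K - 1)).card + (conf A (l - 1) b i (i + K - 1)).card

/-- `g_b` is non-decreasing, and strictly increases at every `b`-crossing index. -/
theorem stmt_6 (N K l b : ℕ) (A : ℕ → ℤ) (hK : 1 ≤ K) (hKN : K ≤ N)
    (hl : 1 ≤ l) (hlK : l ≤ K) :
    ∀ i : ℕ, 1 ≤ i → i ≤ N - K →
      gfun A K l b (i - 1) ≤ gfun A K l b i ∧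
      (Xor' (l ∈ conf A l b (i - 1) (i + K - 2)) (l ∈ conf A l b i (i + K - 1)) →
        gfun A K l b (i - 1) < gfun A K l b i) := by
  intro i hi1 hi2
  obtain ⟨j, rfl⟩ : ∃ j, i = j + 1 := ⟨i - 1, by omega⟩
  have e1 : j + 1 - 1 = j := by omega
  have e2 : j + 1 + K - 2 = j + K - 1 := by omega
  have e3 : j + 1 + K - 1 = j + K := by omega
  rw [e1, e2, e3]
  have m1 : (conf A l b j (j + K - 1)).card ≤ (conf A l b (j+1) (j+K)).card :=
    StmtAux.conf_mono A hK hlK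
  have m2 : (conf A (l-1) b j (j + K - 1)).card ≤ (conf A (l-1) b (j+1) (j+K)).card :=
    StmtAux.conf_mono A hK (by omega)
  have s1 := StmtAux.conf_card_split A (i := j) (j := j + K - 1) (b := b) hl
  have s2 := StmtAux.conf_card_split A (i := j+1) (j := j + K) (b := b) hl
  have hg1 : gfun A K l b j =
      (conf A l b j (j + K - 1)).card + (conf A (l-1) b j (j + K - 1)).card := rfl
  have hg2 : gfun A K l b (j+1) =
      (conf A l b (j+1) (j + K)).card + (conf A (l-1) b (j+1) (j + K)).card := by
    unfold gfun; rw [e3]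
  constructor
  · rw [hg1, hg2]; omega
  · intro hx
    rw [hg1, hg2]
    rw [Xor'] at hx
    rw [StmtAux.mem_conf A hl, StmtAux.mem_conf A hl] at hx
    rcases hx with ⟨ha, hb'⟩ | ⟨ha, hb'⟩
    · rw [if_pos ha] at s1
      rw [if_neg hb'] at s2
      omega
    · rw [if_pos ha] at s2
      rw [if_neg hb'] at s1
      omega
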